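/- For every duplicative forest f, the set of duplicative forests reachable from f under the reflexive-transitive closure of the duplication relation, ordered by this closure, is a finite lattice. -/

import Mathlib

mutual
  /-- A duplicative tree: a node colored white (`false`) or black (`true`) with a forest of children. -/
  inductive DTree : Type
    | node : Bool → DForest → DTree
  /-- A duplicative forest: a finite sequence of duplicative trees. -/
  inductive DForest : Type
    | nil : DForest
    | cons : DTree → DForest → DForest
end

def DForest.append : DForest → DForest → DForest
  | .nil, g => g
  | .cons t f, g => .cons t (f.append g)

mutual
  /-- One duplication step inside a tree. -/
  inductive TStep : DTree → DTree → Prop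
    | dup (c : DForest) : TStep (.node false c) (.node true (c.append c))
    | congr (b : Bool) {c c' : DForest} : FStep c c' → TStep (.node b c) (.node b c')
  /-- One duplication step inside a forest. -/
  inductive FStep : DForest → DForest → Prop
    | head {t t' : DTree} (f : DForest) : TStep t t' → FStep (.cons t f) (.cons t' f)
    | tail (t : DTree) {f f' : DForest} : FStep f f' → FStep (.cons t f) (.cons t f')
end

/-- Duplication order on forests. -/
def FLe : DForest → DForest → Prop := Relation.ReflTransGen FStep

mutual
  /-- Number of black nodes of a tree. -/
  def DTree.black : DTree → ℕ
    | .node b c => (cond b 1 0) + DForest.black c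
  /-- Number of black nodes of a forest. -/
  def DForest.black : DForest → ℕ
    | .nil => 0
    | .cons t f => DTree.black t + DForest.black f
end

/-!
Above `cons t f` the forests are the `cons t' f'` with `t ≤ t'` and `f ≤ f'`, compared
componentwise; the same holds above `a ++ b`, where the splitting is determined by lengths,
which duplication preserves. Above a black node `node true c` the order is that of the
children. Above a white node `node false c` lie the white nodes over forests above `c` and the
black nodes over forests above `c ++ c`, and `node false c' ≤ node true d` exactly when
`c' ++ c' ≤ d`; this reduces the mixed joins to joins above `c ++ c`. Structural induction
therefore shows that every up-set is finite and that any two of its elements have a join.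
In a finite up-set with joins, the join of all common lower bounds of `g` and `h` is their
meet.
-/

section JoinsAndMeets

variable {α : Type*} (r : α → α → Prop)

def IsJoin (g h s : α) : Prop :=
  r g s ∧ r h s ∧ ∀ w, r g w → r h w → r s w

def HasJoinsAbove (a : α) : Prop :=
  ∀ g h, r a g → r a h → ∃ s, IsJoin r g h s

variable {r}

theorem IsJoin.symm {g h s : α} (hs : IsJoin r g h s) : IsJoin r h g s :=
  ⟨hs.2.1, hs.1, fun w hh hg => hs.2.2 w hg hh⟩

theorem exists_meet_of_finite_of_hasJoinsAbove [IsPreorder α r] {a g h : α}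
    (hfin : {x | r a x}.Finite) (hjoin : HasJoinsAbove r a) (hg : r a g) (hh : r a h) :
    ∃ m, r a m ∧ r m g ∧ r m h ∧ ∀ w, r a w → r w g → r w h → r w m := by
  set L := {w | r a w ∧ r w g ∧ r w h}
  suffices ∃ m ∈ L, ∀ w ∈ L, r w m by
    obtain ⟨m, hmL, hm⟩ := this
    exact ⟨m, hmL.1, hmL.2.1, hmL.2.2, fun w h₁ h₂ h₃ => hm w ⟨h₁, h₂, h₃⟩⟩
  refine (hfin.subset fun w hw => hw.1).induction_on_subset
    (motive := fun t _ => ∃ m ∈ L, ∀ w ∈ t, r w m) L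
    ⟨a, ⟨refl_of r a, hg, hh⟩, by simp⟩ ?_
  rintro w t hwL - - ⟨m, hmL, hm⟩
  obtain ⟨s, hws, hms, hs⟩ := hjoin w m hwL.1 hmL.1
  refine ⟨s, ⟨trans_of r hwL.1 hws, hs g hwL.2.1 hmL.2.1, hs h hwL.2.2 hmL.2.2⟩, ?_⟩
  rintro v (rfl | hv)
  · exact hws
  · exact trans_of r (hm v hv) hms

end JoinsAndMeets

def TLe : DTree → DTree → Prop := Relation.ReflTransGen TStep

def DForest.len : DForest → ℕ
  | .nil => 0
  | .cons _ f => f.len + 1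

instance : IsPreorder DForest FLe where
  refl _ := .refl
  trans _ _ _ := Relation.ReflTransGen.trans

theorem TLe.node (b : Bool) {c c' : DForest} (h : FLe c c') : TLe (.node b c) (.node b c') :=
  Relation.ReflTransGen.lift (DTree.node b) (fun _ _ => TStep.congr b) _ _ h

theorem FLe.cons {t t' : DTree} {f f' : DForest} (ht : TLe t t') (hf : FLe f f') :
    FLe (.cons t f) (.cons t' f') :=
  Relation.ReflTransGen.trans
    (Relation.ReflTransGen.lift (DForest.cons · f) (fun _ _ => FStep.head f) _ _ ht)
    (Relation.ReflTransGen.lift (DForest.cons t') (fun _ _ => FStep.tail t') _ _ hf)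

theorem FStep.append_left (b : DForest) : ∀ {a a' : DForest}, FStep a a' →
    FStep (a.append b) (a'.append b)
  | .cons _ _, _, .head _ hs => .head _ hs
  | .cons _ _, _, .tail _ hs => .tail _ (hs.append_left b)

theorem FStep.append_right : ∀ (a : DForest) {b b' : DForest}, FStep b b' →
    FStep (a.append b) (a.append b')
  | .nil, _, _, h => h
  | .cons t f, _, _, h => .tail t (append_right f h)

theorem FLe.append {a a' b b' : DForest} (ha : FLe a a') (hb : FLe b b') :
    FLe (a.append b) (a'.append b') :=
  Relation.ReflTransGen.trans
    (Relation.ReflTransGen.lift (·.append b) (fun _ _ => FStep.append_left b) _ _ ha)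
    (Relation.ReflTransGen.lift a'.append (fun _ _ => FStep.append_right a') _ _ hb)

theorem FStep.len_eq : ∀ {f f' : DForest}, FStep f f' → f.len = f'.len
  | .cons _ _, _, .head _ _ => rfl
  | .cons _ _, _, .tail _ hs => congrArg (· + 1) hs.len_eq

theorem FLe.len_eq {f f' : DForest} (h : FLe f f') : f.len = f'.len :=
  Relation.ReflTransGen.rec rfl (fun _ hs ih => ih.trans hs.len_eq) h

theorem DForest.append_inj : ∀ {a a' b b' : DForest}, a.len = a'.len →
    a.append b = a'.append b' → a = a' ∧ b = b'
  | .nil, .nil, _, _, _, h => ⟨rfl, h⟩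
  | .cons _ _, .cons _ _, _, _, hlen, h => by
    injection h with ht hf
    obtain ⟨rfl, rfl⟩ := append_inj (Nat.succ_injective hlen) hf
    exact ⟨ht ▸ rfl, rfl⟩

theorem FStep.append_inv : ∀ (a : DForest) {b x : DForest}, FStep (a.append b) x →
    (∃ a', FStep a a' ∧ x = a'.append b) ∨ (∃ b', FStep b b' ∧ x = a.append b')
  | .nil, _, x, h => .inr ⟨x, h, rfl⟩
  | .cons t f, _, _, .head _ hs => .inl ⟨_, .head f hs, rfl⟩
  | .cons t f, _, _, .tail _ hs => by
    rcases append_inv f hs with ⟨a', hs', rfl⟩ | ⟨b', hs', rfl⟩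
    · exact .inl ⟨.cons t a', .tail t hs', rfl⟩
    · exact .inr ⟨b', hs', rfl⟩

theorem FLe.nil_inv {x : DForest} (h : FLe .nil x) : x = .nil := by
  induction h with
  | refl => rfl
  | tail _ hs ih => subst ih; cases hs

theorem FLe.cons_inv {t : DTree} {f x : DForest} (h : FLe (.cons t f) x) :
    ∃ t' f', TLe t t' ∧ FLe f f' ∧ x = .cons t' f' := by
  induction h with
  | refl => exact ⟨t, f, .refl, .refl, rfl⟩
  | tail _ hs ih =>
    obtain ⟨t', f', ht, hf, rfl⟩ := ih
    cases hs with
    | head _ hs => exact ⟨_, f', ht.tail hs, hf, rfl⟩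
    | tail _ hs => exact ⟨t', _, ht, hf.tail hs, rfl⟩

theorem FLe.append_inv {a b x : DForest} (h : FLe (a.append b) x) :
    ∃ a' b', FLe a a' ∧ FLe b b' ∧ x = a'.append b' := by
  induction h with
  | refl => exact ⟨a, b, .refl, .refl, rfl⟩
  | tail _ hs ih =>
    obtain ⟨a', b', ha, hb, rfl⟩ := ih
    rcases hs.append_inv a' with ⟨a'', hs', rfl⟩ | ⟨b'', hs', rfl⟩
    · exact ⟨a'', b', ha.tail hs', hb, rfl⟩
    · exact ⟨a', b'', ha, hb.tail hs', rfl⟩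

theorem TLe.black_inv {c : DForest} {x : DTree} (h : TLe (.node true c) x) :
    ∃ c', FLe c c' ∧ x = .node true c' := by
  induction h with
  | refl => exact ⟨c, .refl, rfl⟩
  | tail _ hs ih =>
    obtain ⟨c', hc, rfl⟩ := ih
    cases hs with
    | congr _ hs => exact ⟨_, hc.tail hs, rfl⟩

theorem TLe.white_inv {c : DForest} {x : DTree} (h : TLe (.node false c) x) :
    (∃ c', FLe c c' ∧ x = .node false c') ∨
      (∃ d, FLe (c.append c) d ∧ x = .node true d) := by
  induction h with
  | refl => exact .inl ⟨c, .refl, rfl⟩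
  | tail _ hs ih =>
    rcases ih with ⟨c', hc, rfl⟩ | ⟨d, hd, rfl⟩
    · cases hs with
      | dup _ => exact .inr ⟨_, hc.append hc, rfl⟩
      | congr _ hs => exact .inl ⟨_, hc.tail hs, rfl⟩
    · cases hs with
      | congr _ hs => exact .inr ⟨_, hd.tail hs, rfl⟩

theorem fle_cons_iff {t t' : DTree} {f f' : DForest} :
    FLe (.cons t f) (.cons t' f') ↔ TLe t t' ∧ FLe f f' := by
  refine ⟨fun h => ?_, fun h => FLe.cons h.1 h.2⟩
  obtain ⟨_, _, ht, hf, he⟩ := h.cons_inv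
  obtain ⟨rfl, rfl⟩ := DForest.cons.inj he
  exact ⟨ht, hf⟩

theorem fle_append_iff {a a' b b' : DForest} (hlen : a.len = a'.len) :
    FLe (a.append b) (a'.append b') ↔ FLe a a' ∧ FLe b b' := by
  refine ⟨fun h => ?_, fun h => FLe.append h.1 h.2⟩
  obtain ⟨p, q, hp, hq, he⟩ := h.append_inv
  obtain ⟨rfl, rfl⟩ := DForest.append_inj (hlen.symm.trans hp.len_eq) he
  exact ⟨hp, hq⟩

theorem tle_black_iff {b : Bool} {c c' : DForest} :
    TLe (.node true c) (.node b c') ↔ b = true ∧ FLe c c' := by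
  refine ⟨fun h => ?_, fun ⟨hb, h⟩ => hb ▸ TLe.node true h⟩
  obtain ⟨_, hc, he⟩ := h.black_inv
  obtain ⟨rfl, rfl⟩ := DTree.node.inj he
  exact ⟨rfl, hc⟩

theorem tle_white_white_iff {c c' : DForest} :
    TLe (.node false c) (.node false c') ↔ FLe c c' := by
  refine ⟨fun h => ?_, TLe.node false⟩
  rcases h.white_inv with ⟨_, hc, he⟩ | ⟨_, _, he⟩
  · obtain ⟨-, rfl⟩ := DTree.node.inj he
    exact hc
  · cases he

theorem tle_white_black_iff {c d : DForest} :
    TLe (.node false c) (.node true d) ↔ FLe (c.append c) d := by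
  refine ⟨fun h => ?_, fun h => .head (.dup c) (TLe.node true h)⟩
  rcases h.white_inv with ⟨_, _, he⟩ | ⟨_, hd, he⟩
  · cases he
  · obtain ⟨-, rfl⟩ := DTree.node.inj he
    exact hd

theorem isJoin_cons {t₁ t₂ t : DTree} {f₁ f₂ f : DForest} (ht : IsJoin TLe t₁ t₂ t)
    (hf : IsJoin FLe f₁ f₂ f) : IsJoin FLe (.cons t₁ f₁) (.cons t₂ f₂) (.cons t f) := by
  refine ⟨FLe.cons ht.1 hf.1, FLe.cons ht.2.1 hf.2.1, fun w h₁ h₂ => ?_⟩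
  obtain ⟨t', f', ht₁, hf₁, rfl⟩ := h₁.cons_inv
  obtain ⟨ht₂, hf₂⟩ := fle_cons_iff.1 h₂
  exact FLe.cons (ht.2.2 t' ht₁ ht₂) (hf.2.2 f' hf₁ hf₂)

theorem isJoin_append {a₁ a₂ a b₁ b₂ b : DForest} (hlen : a₁.len = a₂.len)
    (ha : IsJoin FLe a₁ a₂ a) (hb : IsJoin FLe b₁ b₂ b) :
    IsJoin FLe (a₁.append b₁) (a₂.append b₂) (a.append b) := by
  refine ⟨FLe.append ha.1 hb.1, FLe.append ha.2.1 hb.2.1, fun w h₁ h₂ => ?_⟩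
  obtain ⟨a', b', ha₁, hb₁, rfl⟩ := h₁.append_inv
  obtain ⟨ha₂, hb₂⟩ := (fle_append_iff (hlen.symm.trans ha₁.len_eq)).1 h₂
  exact FLe.append (ha.2.2 a' ha₁ ha₂) (hb.2.2 b' hb₁ hb₂)

theorem isJoin_black {c₁ c₂ c : DForest} (hc : IsJoin FLe c₁ c₂ c) :
    IsJoin TLe (.node true c₁) (.node true c₂) (.node true c) := by
  refine ⟨TLe.node true hc.1, TLe.node true hc.2.1, fun w h₁ h₂ => ?_⟩
  obtain ⟨c', hc₁, rfl⟩ := h₁.black_inv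
  exact TLe.node true (hc.2.2 c' hc₁ (tle_black_iff.1 h₂).2)

theorem isJoin_white {c₁ c₂ c : DForest} (hlen : c₁.len = c₂.len)
    (hc : IsJoin FLe c₁ c₂ c) :
    IsJoin TLe (.node false c₁) (.node false c₂) (.node false c) := by
  refine ⟨TLe.node false hc.1, TLe.node false hc.2.1, fun w h₁ h₂ => ?_⟩
  rcases h₁.white_inv with ⟨c', hc₁, rfl⟩ | ⟨d, hd₁, rfl⟩
  · exact TLe.node false (hc.2.2 c' hc₁ (tle_white_white_iff.1 h₂))
  · exact tle_white_black_iff.2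
      ((isJoin_append hlen hc hc).2.2 d hd₁ (tle_white_black_iff.1 h₂))

theorem isJoin_white_black {c₁ d₂ d : DForest} (hd : IsJoin FLe (c₁.append c₁) d₂ d) :
    IsJoin TLe (.node false c₁) (.node true d₂) (.node true d) := by
  refine ⟨tle_white_black_iff.2 hd.1, TLe.node true hd.2.1, fun w h₁ h₂ => ?_⟩
  obtain ⟨d', hd₂, rfl⟩ := h₂.black_inv
  exact TLe.node true (hd.2.2 d' (tle_white_black_iff.1 h₁) hd₂)

theorem hasJoinsAbove_nil : HasJoinsAbove FLe .nil := by
  intro g h hg hh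
  rw [hg.nil_inv, hh.nil_inv]
  exact ⟨.nil, .refl, .refl, fun _ hw _ => hw⟩

theorem hasJoinsAbove_cons {t : DTree} {f : DForest} (ht : HasJoinsAbove TLe t)
    (hf : HasJoinsAbove FLe f) : HasJoinsAbove FLe (.cons t f) := by
  intro g h hg hh
  obtain ⟨tg, fg, htg, hfg, rfl⟩ := hg.cons_inv
  obtain ⟨th, fh, hth, hfh, rfl⟩ := hh.cons_inv
  obtain ⟨t', ht'⟩ := ht tg th htg hth
  obtain ⟨f', hf'⟩ := hf fg fh hfg hfh
  exact ⟨_, isJoin_cons ht' hf'⟩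

theorem hasJoinsAbove_append {a b : DForest} (ha : HasJoinsAbove FLe a)
    (hb : HasJoinsAbove FLe b) : HasJoinsAbove FLe (a.append b) := by
  intro g h hg hh
  obtain ⟨ag, bg, hag, hbg, rfl⟩ := hg.append_inv
  obtain ⟨ah, bh, hah, hbh, rfl⟩ := hh.append_inv
  obtain ⟨a', ha'⟩ := ha ag ah hag hah
  obtain ⟨b', hb'⟩ := hb bg bh hbg hbh
  exact ⟨_, isJoin_append (hag.len_eq.symm.trans hah.len_eq) ha' hb'⟩

theorem hasJoinsAbove_black {c : DForest} (hc : HasJoinsAbove FLe c) :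
    HasJoinsAbove TLe (.node true c) := by
  intro g h hg hh
  obtain ⟨cg, hcg, rfl⟩ := hg.black_inv
  obtain ⟨ch, hch, rfl⟩ := hh.black_inv
  obtain ⟨c', hc'⟩ := hc cg ch hcg hch
  exact ⟨_, isJoin_black hc'⟩

theorem hasJoinsAbove_white {c : DForest} (hc : HasJoinsAbove FLe c) :
    HasJoinsAbove TLe (.node false c) := by
  have hcc := hasJoinsAbove_append hc hc
  intro g h hg hh
  rcases hg.white_inv with ⟨cg, hcg, rfl⟩ | ⟨dg, hdg, rfl⟩ <;>
    rcases hh.white_inv with ⟨ch, hch, rfl⟩ | ⟨dh, hdh, rfl⟩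
  · obtain ⟨c', hc'⟩ := hc cg ch hcg hch
    exact ⟨_, isJoin_white (hcg.len_eq.symm.trans hch.len_eq) hc'⟩
  · obtain ⟨d, hd⟩ := hcc _ dh (FLe.append hcg hcg) hdh
    exact ⟨_, isJoin_white_black hd⟩
  · obtain ⟨d, hd⟩ := hcc dg _ hdg (FLe.append hch hch)
    exact ⟨_, (isJoin_white_black hd.symm).symm⟩
  · obtain ⟨d, hd⟩ := hcc dg dh hdg hdh
    exact ⟨_, isJoin_black hd⟩

mutual

theorem DTree.hasJoinsAbove : ∀ t : DTree, HasJoinsAbove TLe t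
  | .node true c => hasJoinsAbove_black c.hasJoinsAbove
  | .node false c => hasJoinsAbove_white c.hasJoinsAbove

theorem DForest.hasJoinsAbove : ∀ f : DForest, HasJoinsAbove FLe f
  | .nil => hasJoinsAbove_nil
  | .cons t f => hasJoinsAbove_cons t.hasJoinsAbove f.hasJoinsAbove

end

theorem finite_setOf_fle_append {a b : DForest} (ha : {x | FLe a x}.Finite)
    (hb : {x | FLe b x}.Finite) : {x | FLe (a.append b) x}.Finite :=
  (ha.image2 DForest.append hb).subset fun _ hx =>
    let ⟨_, _, ha', hb', he⟩ := FLe.append_inv hx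
    he ▸ Set.mem_image2_of_mem ha' hb'

mutual

theorem DTree.finite_setOf_tle : ∀ t : DTree, {x | TLe t x}.Finite
  | .node true c => (c.finite_setOf_fle.image (DTree.node true)).subset fun _ hx =>
      let ⟨_, hc, he⟩ := TLe.black_inv hx
      he ▸ Set.mem_image_of_mem _ hc
  | .node false c =>
    have hc := c.finite_setOf_fle
    ((hc.image (DTree.node false)).union
      ((finite_setOf_fle_append hc hc).image (DTree.node true))).subset fun _ hx =>
      match TLe.white_inv hx with
      | .inl ⟨_, hc', he⟩ => he ▸ .inl (Set.mem_image_of_mem _ hc')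
      | .inr ⟨_, hd, he⟩ => he ▸ .inr (Set.mem_image_of_mem _ hd)

theorem DForest.finite_setOf_fle : ∀ f : DForest, {x | FLe f x}.Finite
  | .nil => (Set.finite_singleton .nil).subset fun _ hx => FLe.nil_inv hx
  | .cons t f => (t.finite_setOf_tle.image2 DForest.cons f.finite_setOf_fle).subset fun _ hx =>
      let ⟨_, _, ht, hf, he⟩ := FLe.cons_inv hx
      he ▸ Set.mem_image2_of_mem ht hf

end

/-- For every duplicative forest f, the set D*(f) of forests reachable from f,
ordered by the duplication order, is a finite lattice: it is finite and every pair of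
elements has a least upper bound and a greatest lower bound in D*(f). -/
theorem duplicative_forest_lattice (f : DForest) :
    {g : DForest | FLe f g}.Finite ∧
    (∀ g h : DForest, FLe f g → FLe f h →
      (∃ s, FLe f s ∧ FLe g s ∧ FLe h s ∧
        ∀ w, FLe f w → FLe g w → FLe h w → FLe s w) ∧
      (∃ m, FLe f m ∧ FLe m g ∧ FLe m h ∧
        ∀ w, FLe f w → FLe w g → FLe w h → FLe w m)) := by
  refine ⟨f.finite_setOf_fle, fun g h hg hh => ⟨?_, ?_⟩⟩
  · obtain ⟨s, hgs, hhs, hs⟩ := f.hasJoinsAbove g h hg hh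
    exact ⟨s, trans_of FLe hg hgs, hgs, hhs, fun w _ => hs w⟩
  · exact exists_meet_of_finite_of_hasJoinsAbove f.finite_setOf_fle f.hasJoinsAbove hg hh
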